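/- Perturbation bound for elliptic bilinear forms: under the Lax–Milgram setting, if u_a and u_b solve ∫_D a∇u_a·∇v = F(v) and ∫_D b∇u_b·∇v = F(v) for all v ∈ V, with 0 < a₋ ≤ a, b a.e., and ∇u_a ∈ L^{2+j}(D) for some j > 0, then ‖u_a − u_b‖_V ≤ C(a₋, D) ‖a − b‖_{L^{2b'}(D)} ‖∇u_a‖_{L^{2n}(D)} where 1/b' + 1/n = 1 and n < 1 + j/2. -/

import Mathlib

open MeasureTheory

/-- Abstract model of a closed subspace `V ⊆ H¹(D)` with Poincaré inequality
(see the Lax–Milgram setting): embedding into `L²(D)`, gradient into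
`L²(D; ℝ^d)`, `H¹`-norm identity and Poincaré inequality. -/
structure SobolevSubspace (d : ℕ) (μ : Measure (EuclideanSpace ℝ (Fin d)))
    (V : Type*) [NormedAddCommGroup V] [InnerProductSpace ℝ V] [CompleteSpace V] where
  toL2 : V →L[ℝ] Lp ℝ 2 μ
  grad : V →L[ℝ] Lp (EuclideanSpace ℝ (Fin d)) 2 μ
  norm_eq : ∀ v : V, ‖v‖ ^ 2 = ‖toL2 v‖ ^ 2 + ‖grad v‖ ^ 2
  C_P : ℝ
  C_P_pos : 0 < C_P
  poincare : ∀ v : V, ‖v‖ ≤ C_P * ‖grad v‖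

/-!
Testing both weak formulations with `w = u_a - u_b` gives `∫ b |∇w|² = ∫ (b - a) ∇u_a · ∇w`.
The left side is at least `a₋ ‖∇w‖²`; Cauchy–Schwarz bounds the right side by
`‖(a - b) |∇u_a|‖_{L²} ‖∇w‖_{L²}`, and Hölder with the exponents `b'`, `n` splits the first factor
into `‖a - b‖_{L^{2b'}} ‖∇u_a‖_{L^{2n}}`. Poincaré then turns the resulting bound on `‖∇w‖` into
one on `‖w‖_V`, with `C = C_P / a₋`.
-/

open scoped RealInnerProductSpace ENNReal

namespace MeasureTheory

section Holder

variable {α E F : Type*} [MeasurableSpace α] {μ : Measure α}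
  [NormedAddCommGroup E] [NormedAddCommGroup F]

theorem MemLp.norm_rpow_two {u : α → E} {p : ℝ} (hu : MemLp u (ENNReal.ofReal (2 * p)) μ) :
    MemLp (fun x => ‖u x‖ ^ (2 : ℝ)) (ENNReal.ofReal p) μ := by
  have h := hu.norm_rpow_div 2
  rwa [ENNReal.toReal_ofNat, ← ENNReal.ofReal_ofNat, ← ENNReal.ofReal_div_of_pos two_pos,
    mul_div_cancel_left₀ p two_ne_zero] at h

theorem sqrt_integral_sq_norm_mul_norm_le {u : α → E} {v : α → F} {p q : ℝ}
    (hpq : p.HolderConjugate q) (hu : MemLp u (ENNReal.ofReal (2 * p)) μ)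
    (hv : MemLp v (ENNReal.ofReal (2 * q)) μ) :
    √(∫ x, (‖u x‖ * ‖v x‖) ^ 2 ∂μ)
      ≤ (∫ x, ‖u x‖ ^ (2 * p) ∂μ) ^ (1 / (2 * p)) * (∫ x, ‖v x‖ ^ (2 * q) ∂μ) ^ (1 / (2 * q)) := by
  have hHolder := integral_mul_norm_le_Lp_mul_Lq hpq hu.norm_rpow_two hv.norm_rpow_two
  simp (disch := positivity) only [Real.norm_of_nonneg] at hHolder
  simp (disch := positivity) only [← Real.rpow_mul] at hHolder
  simp only [Real.rpow_two, ← mul_pow] at hHolder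
  have sq_rpow_half : ∀ {X r : ℝ}, 0 ≤ X → r ≠ 0 → (X ^ (1 / (2 * r))) ^ 2 = X ^ (1 / r) := by
    intro X r hX hr
    rw [← Real.rpow_mul_natCast hX]
    congr 1
    push_cast
    field_simp
  rw [Real.sqrt_le_iff, mul_pow, sq_rpow_half (integral_nonneg fun _ => by positivity) hpq.ne_zero,
    sq_rpow_half (integral_nonneg fun _ => by positivity) hpq.symm.ne_zero]
  exact ⟨by positivity, hHolder⟩

end Holder

section WeightedL2

variable {α E : Type*} [MeasurableSpace α] {μ : Measure α}
  [NormedAddCommGroup E] [InnerProductSpace ℝ E] {c : α → ℝ}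

theorem L2.integrable_mul_inner (hc : MemLp c ∞ μ) (f g : Lp E 2 μ) :
    Integrable (fun x => c x * ⟪f x, g x⟫) μ :=
  (L2.integrable_inner f g).mul_of_top_right hc

theorem L2.norm_sq_eq_integral_norm_sq (g : Lp E 2 μ) : ‖g‖ ^ 2 = ∫ x, ‖g x‖ ^ 2 ∂μ := by
  simp_rw [← real_inner_self_eq_norm_sq, L2.inner_def]

theorem L2.mul_norm_sq_le_integral_mul_inner_self {m : ℝ} (hc : MemLp c ∞ μ)
    (hm : ∀ᵐ x ∂μ, m ≤ c x) (g : Lp E 2 μ) :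
    m * ‖g‖ ^ 2 ≤ ∫ x, c x * ⟪g x, g x⟫ ∂μ := by
  rw [← real_inner_self_eq_norm_sq, L2.inner_def, ← integral_const_mul]
  refine integral_mono_ae ((L2.integrable_inner g g).const_mul m)
    (L2.integrable_mul_inner hc g g) ?_
  filter_upwards [hm] with x hx
  exact mul_le_mul_of_nonneg_right hx real_inner_self_nonneg

theorem L2.integral_mul_inner_le (hc : MemLp c ∞ μ) (f g : Lp E 2 μ) :
    ∫ x, c x * ⟪f x, g x⟫ ∂μ ≤ √(∫ x, (‖c x‖ * ‖f x‖) ^ 2 ∂μ) * ‖g‖ := by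
  have hcf : MemLp (fun x => ‖c x‖ * ‖f x‖) 2 μ := (Lp.memLp f).norm.mul hc.norm
  have hcfg := integral_mul_norm_le_Lp_mul_Lq Real.HolderConjugate.two_two
    (by simpa using hcf) (by simpa using (Lp.memLp g).norm)
  calc ∫ x, c x * ⟪f x, g x⟫ ∂μ ≤ ∫ x, ‖c x‖ * ‖f x‖ * ‖g x‖ ∂μ := by
        refine integral_mono (L2.integrable_mul_inner hc f g)
          (hcf.integrable_mul (Lp.memLp g).norm) fun x => ?_
        calc c x * ⟪f x, g x⟫ ≤ ‖c x‖ * |⟪f x, g x⟫| := by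
              rw [Real.norm_eq_abs, ← abs_mul]; exact le_abs_self _
          _ ≤ ‖c x‖ * ‖f x‖ * ‖g x‖ := by
              rw [mul_assoc]; gcongr; exact abs_real_inner_le_norm _ _
    _ ≤ √(∫ x, (‖c x‖ * ‖f x‖) ^ 2 ∂μ) * ‖g‖ := by
        rw [← Real.sqrt_sq (norm_nonneg g), L2.norm_sq_eq_integral_norm_sq]
        simpa [Real.sqrt_eq_rpow] using hcfg

variable {V : Type*} [NormedAddCommGroup V] [NormedSpace ℝ V] (G : V →L[ℝ] Lp E 2 μ)
  {a b : α → ℝ} {ua ub : V}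

theorem integral_mul_inner_map_sub_eq (ha : MemLp a ∞ μ) (hb : MemLp b ∞ μ)
    (hweak : ∀ v, ∫ x, a x * ⟪G ua x, G v x⟫ ∂μ = ∫ x, b x * ⟪G ub x, G v x⟫ ∂μ) (v : V) :
    ∫ x, b x * ⟪G (ua - ub) x, G v x⟫ ∂μ = ∫ x, (b x - a x) * ⟪G ua x, G v x⟫ ∂μ := by
  have hsplit : ∫ x, b x * ⟪G (ua - ub) x, G v x⟫ ∂μ
      = ∫ x, b x * ⟪G ua x, G v x⟫ ∂μ - ∫ x, b x * ⟪G ub x, G v x⟫ ∂μ := by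
    rw [← integral_sub (L2.integrable_mul_inner hb _ _) (L2.integrable_mul_inner hb _ _)]
    refine integral_congr_ae ?_
    filter_upwards [Lp.coeFn_sub (G ua) (G ub)] with x hx
    rw [map_sub, hx, Pi.sub_apply, inner_sub_left, mul_sub]
  rw [hsplit, ← hweak, ← integral_sub (L2.integrable_mul_inner hb _ _)
    (L2.integrable_mul_inner ha _ _)]
  simp only [sub_mul]

theorem mul_norm_map_sub_le_of_integral_mul_inner_eq {m : ℝ} (ha : MemLp a ∞ μ)
    (hb : MemLp b ∞ μ) (hm : ∀ᵐ x ∂μ, m ≤ b x)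
    (hweak : ∀ v, ∫ x, a x * ⟪G ua x, G v x⟫ ∂μ = ∫ x, b x * ⟪G ub x, G v x⟫ ∂μ) :
    m * ‖G (ua - ub)‖ ≤ √(∫ x, (‖a x - b x‖ * ‖G ua x‖) ^ 2 ∂μ) := by
  set w := G (ua - ub)
  have hquad : m * ‖w‖ * ‖w‖ ≤ √(∫ x, (‖a x - b x‖ * ‖G ua x‖) ^ 2 ∂μ) * ‖w‖ :=
    calc m * ‖w‖ * ‖w‖ = m * ‖w‖ ^ 2 := by ring
      _ ≤ ∫ x, b x * ⟪w x, w x⟫ ∂μ := L2.mul_norm_sq_le_integral_mul_inner_self hb hm w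
      _ = ∫ x, (b x - a x) * ⟪G ua x, w x⟫ ∂μ := integral_mul_inner_map_sub_eq G ha hb hweak _
      _ ≤ √(∫ x, (‖b x - a x‖ * ‖G ua x‖) ^ 2 ∂μ) * ‖w‖ :=
          L2.integral_mul_inner_le (hb.sub ha) (G ua) w
      _ = √(∫ x, (‖a x - b x‖ * ‖G ua x‖) ^ 2 ∂μ) * ‖w‖ := by simp only [norm_sub_rev]
  rcases (norm_nonneg w).eq_or_lt with hw | hw
  · rw [← hw, mul_zero]; positivity
  · exact le_of_mul_le_mul_right hquad hw

end WeightedL2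

end MeasureTheory

theorem elliptic_perturbation_bound_general
    (d : ℕ) (D : Set (EuclideanSpace ℝ (Fin d)))
    (hDbd : Bornology.IsBounded D)
    (V : Type*) [NormedAddCommGroup V] [InnerProductSpace ℝ V] [CompleteSpace V]
    (S : SobolevSubspace d (volume.restrict D) V)
    (aLow : ℝ) (haLow : 0 < aLow)
    (j b' n : ℝ) (hb' : 1 < b')
    (hconj : 1 / b' + 1 / n = 1) (hn2 : n < 1 + j / 2) :
    ∃ C > 0, ∀ (a b : EuclideanSpace ℝ (Fin d) → ℝ) (aUp bUp : ℝ)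
      (F : V →L[ℝ] ℝ) (ua ub : V),
      Measurable a → Measurable b →
      (∀ᵐ x ∂(volume.restrict D), aLow ≤ a x ∧ a x ≤ aUp) →
      (∀ᵐ x ∂(volume.restrict D), aLow ≤ b x ∧ b x ≤ bUp) →
      (∀ v : V,
        ∫ x, a x * (inner ℝ (S.grad ua x) (S.grad v x) : ℝ) ∂(volume.restrict D) = F v) →
      (∀ v : V,
        ∫ x, b x * (inner ℝ (S.grad ub x) (S.grad v x) : ℝ) ∂(volume.restrict D) = F v) →
      MemLp (fun x => ‖S.grad ua x‖) (ENNReal.ofReal (2 + j)) (volume.restrict D) →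
      ‖ua - ub‖
        ≤ C * (∫ x, |a x - b x| ^ (2 * b') ∂(volume.restrict D)) ^ (1 / (2 * b'))
            * (∫ x, ‖S.grad ua x‖ ^ (2 * n) ∂(volume.restrict D)) ^ (1 / (2 * n)) := by
  refine ⟨S.C_P / aLow, div_pos S.C_P_pos haLow, ?_⟩
  intro a b aUp bUp F ua ub ha hb haBd hbBd hFa hFb hGa
  have : IsFiniteMeasure (volume.restrict D) :=
    isFiniteMeasure_restrict.mpr hDbd.measure_lt_top.ne
  have ha_top : MemLp a ∞ (volume.restrict D) := memLp_of_bounded haBd ha.aestronglyMeasurable ∞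
  have hb_top : MemLp b ∞ (volume.restrict D) := memLp_of_bounded hbBd hb.aestronglyMeasurable ∞
  have hgrad := mul_norm_map_sub_le_of_integral_mul_inner_eq S.grad ha_top hb_top
    (hbBd.mono fun _ hx => hx.1) fun v => (hFa v).trans (hFb v).symm
  have hHolder := sqrt_integral_sq_norm_mul_norm_le
    (Real.holderConjugate_iff.mpr ⟨hb', by simpa only [one_div] using hconj⟩)
    ((ha_top.sub hb_top).mono_exponent le_top)
    (((memLp_norm_iff (Lp.aestronglyMeasurable _)).mp hGa).mono_exponent
      (ENNReal.ofReal_le_ofReal (by linarith)))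
  simp only [Pi.sub_apply, Real.norm_eq_abs] at hHolder
  calc ‖ua - ub‖ ≤ S.C_P * ‖S.grad (ua - ub)‖ := S.poincare _
    _ ≤ S.C_P * (√(∫ x, (‖a x - b x‖ * ‖S.grad ua x‖) ^ 2 ∂(volume.restrict D)) / aLow) :=
        mul_le_mul_of_nonneg_left ((le_div_iff₀' haLow).mpr hgrad) S.C_P_pos.le
    _ ≤ S.C_P * ((∫ x, |a x - b x| ^ (2 * b') ∂(volume.restrict D)) ^ (1 / (2 * b'))
          * (∫ x, ‖S.grad ua x‖ ^ (2 * n) ∂(volume.restrict D)) ^ (1 / (2 * n)) / aLow) := by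
        gcongr
        exacts [S.C_P_pos.le, hHolder]
    _ = _ := by ring

/-- Perturbation bound for elliptic bilinear forms: if `u_a` and `u_b` solve
`∫_D a ∇u_a·∇v = F(v)` and `∫_D b ∇u_b·∇v = F(v)` for all `v ∈ V`, with
`0 < a₋ ≤ a, b` a.e. (and `a, b ∈ L^∞(D)`), and `∇u_a ∈ L^{2+j}(D)` for some
`j > 0`, then `‖u_a − u_b‖_V ≤ C(a₋, D) ‖a − b‖_{L^{2b'}(D)} ‖∇u_a‖_{L^{2n}(D)}`
where `1/b' + 1/n = 1` and `n < 1 + j/2`. -/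
theorem elliptic_perturbation_bound
    (d : ℕ) (D : Set (EuclideanSpace ℝ (Fin d)))
    (hDopen : IsOpen D) (hDbd : Bornology.IsBounded D) (hDne : D.Nonempty)
    (V : Type*) [NormedAddCommGroup V] [InnerProductSpace ℝ V] [CompleteSpace V]
    (S : SobolevSubspace d (volume.restrict D) V)
    (aLow : ℝ) (haLow : 0 < aLow)
    (j b' n : ℝ) (hj : 0 < j) (hb' : 1 < b') (hn : 1 < n)
    (hconj : 1 / b' + 1 / n = 1) (hn2 : n < 1 + j / 2) :
    ∃ C > 0, ∀ (a b : EuclideanSpace ℝ (Fin d) → ℝ) (aUp bUp : ℝ)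
      (F : V →L[ℝ] ℝ) (ua ub : V),
      Measurable a → Measurable b →
      (∀ᵐ x ∂(volume.restrict D), aLow ≤ a x ∧ a x ≤ aUp) →
      (∀ᵐ x ∂(volume.restrict D), aLow ≤ b x ∧ b x ≤ bUp) →
      (∀ v : V,
        ∫ x, a x * (inner ℝ (S.grad ua x) (S.grad v x) : ℝ) ∂(volume.restrict D) = F v) →
      (∀ v : V,
        ∫ x, b x * (inner ℝ (S.grad ub x) (S.grad v x) : ℝ) ∂(volume.restrict D) = F v) →
      MemLp (fun x => ‖S.grad ua x‖) (ENNReal.ofReal (2 + j)) (volume.restrict D) →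
      ‖ua - ub‖
        ≤ C * (∫ x, |a x - b x| ^ (2 * b') ∂(volume.restrict D)) ^ (1 / (2 * b'))
            * (∫ x, ‖S.grad ua x‖ ^ (2 * n) ∂(volume.restrict D)) ^ (1 / (2 * n)) :=
  elliptic_perturbation_bound_general d D hDbd V S aLow haLow j b' n hb' hconj hn2
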